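/- Let (Ω,F,ℙ) be a probability space, H a real Hilbert space, (φ_k)_{k≥1} an orthonormal family in H, (λ_k)_{k≥1} a summable sequence of nonnegative reals, and (Y_k)_{k≥1} random variables in L²(Ω) with 𝔼[Y_k] = 0 and 𝔼[Y_j Y_k] = δ_{jk}. Let v = Σ_{k≥1} √λ_k Y_k φ_k in L²(Ω;H), fix M ≥ 1, let V_0 = span{φ_1,…,φ_M}, and let P be the orthogonal projection of H onto V_0^⊥. Let w ∈ L²(Ω;H) satisfy w(ω) ∈ V_0^⊥ almost surely, set u = v + w and t_M := Σ_{k≥M+1} λ_k. Then ( ‖w‖_{L²(Ω;H)} − √t_M )² ≤ ‖Pu‖²_{L²(Ω;H)} ≤ ( ‖w‖_{L²(Ω;H)} + √t_M )². -/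

import Mathlib

/-! Pointwise application of the projection `P` is a bounded operator on `L²(Ω;H)` fixing `w`, so
`Pu = Pv + w` there. Applied to the partial sums of the series for `v`, `P` keeps exactly the
terms with `k ≥ M`, whose squared `L²` norm is `Σ_{M ≤ k < n} λ_k` by orthonormality of the `φ_k`
and `𝔼[Y_k²] = 1`; passing to the limit gives `‖Pv‖² = t_M`. Both bounds are then the triangle
inequality `|‖w‖ - ‖Pv‖| ≤ ‖Pv + w‖ ≤ ‖w‖ + ‖Pv‖` in `L²(Ω;H)`. -/

open MeasureTheory Filter Topology Finset
open scoped RealInnerProductSpace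

theorem sq_norm_sub_norm_le_sq_norm_add {E : Type*} [SeminormedAddCommGroup E] (a b : E) :
    (‖b‖ - ‖a‖) ^ 2 ≤ ‖a + b‖ ^ 2 := by
  have h := abs_norm_sub_norm_le b (-a)
  rw [norm_neg, sub_neg_eq_add, add_comm] at h
  exact sq_le_sq.2 (h.trans_eq (abs_norm _).symm)

theorem sq_norm_add_le_sq_norm_add_norm {E : Type*} [SeminormedAddCommGroup E] (a b : E) :
    ‖a + b‖ ^ 2 ≤ (‖b‖ + ‖a‖) ^ 2 :=
  pow_le_pow_left₀ (norm_nonneg _) ((norm_add_le a b).trans_eq (add_comm _ _)) 2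

theorem Summable.tendsto_sum_Ico_tsum_nat_add {G : Type*} [AddCommGroup G] [TopologicalSpace G]
    [IsTopologicalAddGroup G] {f : ℕ → G} (hf : Summable f) (M : ℕ) :
    Tendsto (fun n => ∑ k ∈ Ico M n, f k) atTop (𝓝 (∑' k, f (M + k))) := by
  have hM : Summable fun k => f (M + k) :=
    ((summable_nat_add_iff M).2 hf).congr fun k => by rw [add_comm]
  simpa only [sum_Ico_eq_sum_range, Function.comp_def] using
    hM.tendsto_sum_tsum_nat.comp (tendsto_sub_atTop_nat M)

theorem Orthonormal.norm_sum_smul_sq {H ι : Type*} [NormedAddCommGroup H] [InnerProductSpace ℝ H]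
    {φ : ι → H} (hφ : Orthonormal ℝ φ) (s : Finset ι) (c : ι → ℝ) :
    ‖∑ i ∈ s, c i • φ i‖ ^ 2 = ∑ i ∈ s, c i ^ 2 := by
  rw [← real_inner_self_eq_norm_sq, hφ.inner_sum]
  simp [sq]

section
variable {α E : Type*} [MeasurableSpace α] {μ : Measure α}
  [NormedAddCommGroup E] [InnerProductSpace ℝ E]

theorem MeasureTheory.L2.norm_sq_eq_integral_norm_sq (f : Lp E 2 μ) :
    ‖f‖ ^ 2 = ∫ a, ‖f a‖ ^ 2 ∂μ := by
  simp only [← real_inner_self_eq_norm_sq, L2.inner_def]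

theorem MeasureTheory.MemLp.norm_toLp_sq {f : α → E} (hf : MemLp f 2 μ) :
    ‖hf.toLp f‖ ^ 2 = ∫ a, ‖f a‖ ^ 2 ∂μ := by
  rw [L2.norm_sq_eq_integral_norm_sq]
  exact integral_congr_ae (hf.coeFn_toLp.mono fun _ h => congrArg (‖·‖ ^ 2) h)

theorem MeasureTheory.MemLp.tendsto_toLp_of_tendsto_integral_norm_sub_sq {ι : Type*}
    {l : Filter ι} {f : α → E} {g : ι → α → E} (hf : MemLp f 2 μ) (hg : ∀ i, MemLp (g i) 2 μ)
    (h : Tendsto (fun i => ∫ a, ‖f a - g i a‖ ^ 2 ∂μ) l (𝓝 0)) :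
    Tendsto (fun i => (hg i).toLp (g i)) l (𝓝 (hf.toLp f)) := by
  rw [tendsto_iff_norm_sub_tendsto_zero]
  have hnorm : ∀ i, ‖(hg i).toLp (g i) - hf.toLp f‖ = √(∫ a, ‖f a - g i a‖ ^ 2 ∂μ) := fun i => by
    rw [norm_sub_rev, ← MemLp.toLp_sub, ← Real.sqrt_sq (norm_nonneg _),
      (hf.sub (hg i)).norm_toLp_sq]
    rfl
  simpa [hnorm, Function.comp_def] using (Real.continuous_sqrt.tendsto 0).comp h

end

section
variable {H ι : Type*} [NormedAddCommGroup H] [InnerProductSpace ℝ H] {φ : ι → H}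

theorem Orthonormal.mem_orthogonal_span_image (hφ : Orthonormal ℝ φ) {s : Set ι} {i : ι}
    (hi : i ∉ s) : φ i ∈ (Submodule.span ℝ (φ '' s))ᗮ := by
  have h : Submodule.span ℝ {φ i} ⟂ Submodule.span ℝ (φ '' s) := by
    refine Submodule.isOrtho_span.2 ?_
    rintro _ rfl _ ⟨j, hj, rfl⟩
    exact hφ.inner_eq_zero (ne_of_mem_of_not_mem hj hi).symm
  exact h.le (Submodule.mem_span_singleton_self _)

theorem Orthonormal.starProjection_orthogonal_span_image_sum (hφ : Orthonormal ℝ φ) (s : Set ι)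
    [(Submodule.span ℝ (φ '' s))ᗮ.HasOrthogonalProjection] [DecidablePred (· ∈ s)]
    (t : Finset ι) (c : ι → ℝ) :
    (Submodule.span ℝ (φ '' s))ᗮ.starProjection (∑ i ∈ t, c i • φ i)
      = ∑ i ∈ t with i ∉ s, c i • φ i := by
  rw [map_sum, sum_filter]
  refine sum_congr rfl fun i _ => ?_
  rw [map_smul]
  split_ifs with hi
  · rw [(Submodule.starProjection_apply_eq_zero_iff _).2
      (Submodule.le_orthogonal_orthogonal _ (Submodule.subset_span (Set.mem_image_of_mem φ hi))),
      smul_zero]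
  · rw [Submodule.starProjection_eq_self_iff.2 (hφ.mem_orthogonal_span_image hi)]

theorem Orthonormal.integral_norm_sum_smul_sq {α : Type*} [MeasurableSpace α] {μ : Measure α}
    (hφ : Orthonormal ℝ φ) {Y : ι → α → ℝ} {s : Finset ι} (hY : ∀ i ∈ s, MemLp (Y i) 2 μ)
    (hY1 : ∀ i ∈ s, ∫ ω, Y i ω * Y i ω ∂μ = 1) (a : ι → ℝ) :
    ∫ ω, ‖∑ i ∈ s, (a i * Y i ω) • φ i‖ ^ 2 ∂μ = ∑ i ∈ s, a i ^ 2 := by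
  simp_rw [hφ.norm_sum_smul_sq, mul_pow]
  rw [integral_finsetSum _ fun i hi => ((hY i hi).integrable_sq).const_mul _]
  refine sum_congr rfl fun i hi => ?_
  have hYi : ∫ ω, Y i ω ^ 2 ∂μ = 1 := by simpa only [sq] using hY1 i hi
  rw [integral_const_mul, hYi, mul_one]

end

theorem Orthonormal.norm_compLpL_starProjection_toLp_sq {Ω H : Type*} [MeasurableSpace Ω]
    {μ : Measure Ω} [NormedAddCommGroup H] [InnerProductSpace ℝ H] {φ : ℕ → H}
    (hφ : Orthonormal ℝ φ) {lam : ℕ → ℝ} (hlam : ∀ k, 0 ≤ lam k) (hsum : Summable lam)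
    {Y : ℕ → Ω → ℝ} (hY : ∀ k, MemLp (Y k) 2 μ) (hY1 : ∀ k, ∫ ω, Y k ω * Y k ω ∂μ = 1)
    {v : Ω → H} (hv : MemLp v 2 μ)
    (hconv : Tendsto
      (fun n => ∫ ω, ‖v ω - ∑ k ∈ range n, (√(lam k) * Y k ω) • φ k‖ ^ 2 ∂μ) atTop (𝓝 0))
    (M : ℕ) [(Submodule.span ℝ (φ '' Set.Iio M))ᗮ.HasOrthogonalProjection] :
    ‖(Submodule.span ℝ (φ '' Set.Iio M))ᗮ.starProjection.compLpL 2 μ (hv.toLp v)‖ ^ 2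
      = ∑' k, lam (M + k) := by
  set T := (Submodule.span ℝ (φ '' Set.Iio M))ᗮ.starProjection.compLpL 2 μ
  set s : ℕ → Ω → H := fun n ω => ∑ k ∈ range n, (√(lam k) * Y k ω) • φ k
  have hs : ∀ n, MemLp (s n) 2 μ := fun n =>
    memLp_finsetSum _ fun k _ => (memLp_top_const (φ k)).smul ((hY k).const_mul _)
  have hTs : ∀ n, ‖T ((hs n).toLp (s n))‖ ^ 2 = ∑ k ∈ Ico M n, lam k := fun n => by
    have hIco : {k ∈ range n | k ∉ Set.Iio M} = Ico M n := by ext; simp [and_comm]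
    rw [L2.norm_sq_eq_integral_norm_sq]
    calc ∫ ω, ‖T ((hs n).toLp (s n)) ω‖ ^ 2 ∂μ
        = ∫ ω, ‖∑ k ∈ Ico M n, (√(lam k) * Y k ω) • φ k‖ ^ 2 ∂μ := by
          refine integral_congr_ae ?_
          filter_upwards [(Submodule.span ℝ (φ '' Set.Iio M))ᗮ.starProjection.coeFn_compLpL
            ((hs n).toLp (s n)), (hs n).coeFn_toLp] with ω hT hsω
          rw [hT, hsω, hφ.starProjection_orthogonal_span_image_sum, hIco]
      _ = ∑ k ∈ Ico M n, lam k := by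
          rw [hφ.integral_norm_sum_smul_sq (fun k _ => hY k) (fun k _ => hY1 k)]
          exact sum_congr rfl fun k _ => Real.sq_sqrt (hlam k)
  have hlim := ((T.continuous.tendsto _).comp
    (hv.tendsto_toLp_of_tendsto_integral_norm_sub_sq hs hconv)).norm.pow 2
  exact tendsto_nhds_unique ((hsum.tendsto_sum_Ico_tsum_nat_add M).congr fun n => (hTs n).symm)
    hlim |>.symm

theorem stmt9_general {Ω : Type*} [MeasurableSpace Ω] (μ : Measure Ω)
    {H : Type*} [NormedAddCommGroup H] [InnerProductSpace ℝ H]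
    (φ : ℕ → H) (hφ : Orthonormal ℝ φ)
    (lam : ℕ → ℝ) (hlam : ∀ k, 0 ≤ lam k) (hsum : Summable lam)
    (Y : ℕ → Ω → ℝ) (hY : ∀ k, MemLp (Y k) 2 μ)
    (hYcov : ∀ j k, ∫ ω, Y j ω * Y k ω ∂μ = if j = k then (1 : ℝ) else 0)
    (v : Ω → H) (hv : MemLp v 2 μ)
    (hconv : Filter.Tendsto
      (fun n => ∫ ω, ‖v ω - ∑ k ∈ Finset.range n, (Real.sqrt (lam k) * Y k ω) • φ k‖ ^ 2 ∂μ)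
      Filter.atTop (nhds 0))
    (M : ℕ)
    (P : H → H)
    (hP1 : ∀ x, P x ∈ (Submodule.span ℝ (φ '' Set.Iio M))ᗮ)
    (hP2 : ∀ x, x - P x ∈ Submodule.span ℝ (φ '' Set.Iio M))
    (w : Ω → H) (hw : MemLp w 2 μ)
    (hworth : ∀ᵐ ω ∂μ, w ω ∈ (Submodule.span ℝ (φ '' Set.Iio M))ᗮ)
    (u : Ω → H) (hu : ∀ ω, u ω = v ω + w ω) :
    (Real.sqrt (∫ ω, ‖w ω‖ ^ 2 ∂μ) - Real.sqrt (∑' k : ℕ, lam (M + k))) ^ 2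
      ≤ ∫ ω, ‖P (u ω)‖ ^ 2 ∂μ ∧
    ∫ ω, ‖P (u ω)‖ ^ 2 ∂μ
      ≤ (Real.sqrt (∫ ω, ‖w ω‖ ^ 2 ∂μ) + Real.sqrt (∑' k : ℕ, lam (M + k))) ^ 2 := by
  set K := Submodule.span ℝ (φ '' Set.Iio M)
  have : FiniteDimensional ℝ K := .span_of_finite ℝ ((Set.finite_Iio M).image φ)
  have hP : ∀ x, P x = Kᗮ.starProjection x := fun x =>
    (Kᗮ.eq_starProjection_of_mem_orthogonal' (hP1 x) (K.le_orthogonal_orthogonal (hP2 x))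
      (add_sub_cancel (P x) x).symm).symm
  set T := Kᗮ.starProjection.compLpL 2 μ
  have hTv : ‖T (hv.toLp v)‖ = √(∑' k, lam (M + k)) := by
    rw [← hφ.norm_compLpL_starProjection_toLp_sq hlam hsum hY (fun k => by simp [hYcov]) hv hconv,
      Real.sqrt_sq (norm_nonneg _)]
  have hW : ‖hw.toLp w‖ = √(∫ ω, ‖w ω‖ ^ 2 ∂μ) := by
    rw [← hw.norm_toLp_sq, Real.sqrt_sq (norm_nonneg _)]
  have hPu : ∫ ω, ‖P (u ω)‖ ^ 2 ∂μ = ‖T (hv.toLp v) + hw.toLp w‖ ^ 2 := by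
    rw [L2.norm_sq_eq_integral_norm_sq]
    refine integral_congr_ae ?_
    filter_upwards [Lp.coeFn_add (T (hv.toLp v)) (hw.toLp w), Kᗮ.starProjection.coeFn_compLpL
      (hv.toLp v), hv.coeFn_toLp, hw.coeFn_toLp, hworth] with ω hadd hT hvω hwω hwK
    rw [hadd, Pi.add_apply, hT, hvω, hwω, hu, hP, map_add,
      Submodule.starProjection_eq_self_iff.2 hwK]
  rw [hPu, ← hTv, ← hW]
  exact ⟨sq_norm_sub_norm_le_sq_norm_add _ _, sq_norm_add_le_sq_norm_add_norm _ _⟩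

/-- Two-sided detection bound of Theorem 3.3: with `V₀ = span{φ_0,…,φ_{M-1}}`, `P` the
orthogonal projection onto `V₀ᗮ`, `w(ω) ∈ V₀ᗮ` a.s., `u = v + w` and
`t_M = Σ_{k ≥ M} λ_k`, one has
`(‖w‖_{L²(Ω;H)} - √t_M)² ≤ ‖Pu‖²_{L²(Ω;H)} ≤ (‖w‖_{L²(Ω;H)} + √t_M)²`. -/
theorem stmt9 {Ω : Type*} [MeasurableSpace Ω] (μ : Measure Ω) [IsProbabilityMeasure μ]
    {H : Type*} [NormedAddCommGroup H] [InnerProductSpace ℝ H] [CompleteSpace H]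
    (φ : ℕ → H) (hφ : Orthonormal ℝ φ)
    (lam : ℕ → ℝ) (hlam : ∀ k, 0 ≤ lam k) (hsum : Summable lam)
    (Y : ℕ → Ω → ℝ) (hY : ∀ k, MemLp (Y k) 2 μ)
    (hYmean : ∀ k, ∫ ω, Y k ω ∂μ = 0)
    (hYcov : ∀ j k, ∫ ω, Y j ω * Y k ω ∂μ = if j = k then (1 : ℝ) else 0)
    (v : Ω → H) (hv : MemLp v 2 μ)
    (hconv : Filter.Tendsto
      (fun n => ∫ ω, ‖v ω - ∑ k ∈ Finset.range n, (Real.sqrt (lam k) * Y k ω) • φ k‖ ^ 2 ∂μ)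
      Filter.atTop (nhds 0))
    (M : ℕ) (hM : 1 ≤ M)
    (P : H → H)
    (hP1 : ∀ x, P x ∈ (Submodule.span ℝ (φ '' Set.Iio M))ᗮ)
    (hP2 : ∀ x, x - P x ∈ Submodule.span ℝ (φ '' Set.Iio M))
    (w : Ω → H) (hw : MemLp w 2 μ)
    (hworth : ∀ᵐ ω ∂μ, w ω ∈ (Submodule.span ℝ (φ '' Set.Iio M))ᗮ)
    (u : Ω → H) (hu : ∀ ω, u ω = v ω + w ω) :
    (Real.sqrt (∫ ω, ‖w ω‖ ^ 2 ∂μ) - Real.sqrt (∑' k : ℕ, lam (M + k))) ^ 2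
      ≤ ∫ ω, ‖P (u ω)‖ ^ 2 ∂μ ∧
    ∫ ω, ‖P (u ω)‖ ^ 2 ∂μ
      ≤ (Real.sqrt (∫ ω, ‖w ω‖ ^ 2 ∂μ) + Real.sqrt (∑' k : ℕ, lam (M + k))) ^ 2 :=
  stmt9_general μ φ hφ lam hlam hsum Y hY hYcov v hv hconv M P hP1 hP2 w hw hworth u hu
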